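/- Let p, q ∈ ℕ. Then the function u(z) = −(1/(q+1)) Σ_{k=1}^{q+1} (−1)^k binom(q+1, k) z̄^k H_{p, q+1−k}(z, z̄) solves the ∂̄-problem ∂̄u(z) = H_{p,q}(z, z̄) for all z ∈ ℂ. -/

import Mathlib

/-!
`∂̄` is a derivation on real-differentiable functions that kills holomorphic ones and sends `z̄`
to `1`, so `∂̄(z^a z̄^b) = b z^a z̄^(b-1)` and hence `∂̄H_{m,n} = n H_{m,n-1}`. With
`T_i = (-1)^i C(q,i) z̄^i H_{p,q-i}`, the Leibniz rule and the absorption identities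
`k·C(q+1,k) = (q+1)·C(q,k-1)` and `(q+1-k)·C(q+1,k) = (q+1)·C(q,k)` give the `k`-th summand
of `u` the `∂̄`-image `(q+1)(T_k - T_{k-1})`. Since `T_{q+1} = 0`, the sum telescopes to
`-(q+1) T_0 = -(q+1) H_{p,q}`.
-/

/-- The Wirtinger (Cauchy–Riemann) operator `∂̄u(z) = (1/2)(∂u/∂x + i ∂u/∂y)`. -/
noncomputable def dbar (u : ℂ → ℂ) (z : ℂ) : ℂ :=
  (1 / 2) * (fderiv ℝ u z 1 + Complex.I * fderiv ℝ u z Complex.I)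

/-- The Itô complex Hermite polynomials. -/
noncomputable def hermiteC (m n : ℕ) (z : ℂ) : ℂ :=
  ∑ k ∈ Finset.range (min m n + 1),
    (-1) ^ k * (k.factorial : ℂ) * (m.choose k) * (n.choose k) *
      z ^ (m - k) * (starRingEnd ℂ) z ^ (n - k)

open ComplexConjugate Finset

section Wirtinger

variable {f g : ℂ → ℂ} {z : ℂ}

lemma dbar_mul (hf : DifferentiableAt ℝ f z) (hg : DifferentiableAt ℝ g z) :
    dbar (fun w => f w * g w) z = dbar f z * g z + f z * dbar g z := by
  simp only [dbar, fderiv_fun_mul hf hg, add_apply, smul_apply, smul_eq_mul]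
  ring

lemma dbar_const_mul (c : ℂ) (hf : DifferentiableAt ℝ f z) :
    dbar (fun w => c * f w) z = c * dbar f z := by
  simp only [dbar, fderiv_const_mul hf, smul_apply, smul_eq_mul]
  ring

lemma dbar_sum {ι : Type*} (s : Finset ι) {F : ι → ℂ → ℂ}
    (hF : ∀ i ∈ s, DifferentiableAt ℝ (F i) z) :
    dbar (fun w => ∑ i ∈ s, F i w) z = ∑ i ∈ s, dbar (F i) z := by
  simp only [dbar, fderiv_fun_sum hF, _root_.sum_apply, mul_sum, ← sum_add_distrib]

lemma dbar_pow (n : ℕ) (hf : DifferentiableAt ℝ f z) :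
    dbar (fun w => f w ^ n) z = n * f z ^ (n - 1) * dbar f z := by
  simp only [dbar, fderiv_fun_pow n hf, smul_apply, nsmul_eq_mul, smul_eq_mul]
  ring

lemma dbar_eq_zero_of_differentiableAt (hf : DifferentiableAt ℂ f z) : dbar f z = 0 := by
  have hI : fderiv ℂ f z Complex.I = Complex.I * fderiv ℂ f z 1 := by
    rw [← smul_eq_mul, ← map_smul, smul_eq_mul, mul_one]
  rw [dbar, hf.fderiv_restrictScalars ℝ, ContinuousLinearMap.coe_restrictScalars', hI]
  linear_combination (1 / 2 * fderiv ℂ f z 1) * Complex.I_mul_I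

lemma dbar_conj : dbar conj z = 1 := by
  have : fderiv ℝ conj z = Complex.conjCLE := Complex.conjCLE.fderiv
  norm_num [dbar, this]

lemma dbar_conj_pow (n : ℕ) : dbar (fun w => conj w ^ n) z = n * conj z ^ (n - 1) := by
  rw [dbar_pow (f := conj) n (by fun_prop), dbar_conj, mul_one]

lemma dbar_monomial (c : ℂ) (a b : ℕ) :
    dbar (fun w => c * w ^ a * conj w ^ b) z = c * b * z ^ a * conj z ^ (b - 1) := by
  rw [dbar_mul (f := fun w => c * w ^ a) (by fun_prop) (by fun_prop),
    dbar_eq_zero_of_differentiableAt (by fun_prop), dbar_conj_pow]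
  ring

end Wirtinger

lemma Nat.sub_mul_choose (n k : ℕ) : (n - k) * n.choose k = n * (n - 1).choose k := by
  cases n with
  | zero => simp
  | succ n => rw [Nat.add_sub_cancel, mul_comm, ← Nat.choose_mul_succ_eq, mul_comm]

lemma hermiteC_eq_sum_range (m n : ℕ) (z : ℂ) :
    hermiteC m n z = ∑ k ∈ range (m + 1),
      (-1) ^ k * (k.factorial : ℂ) * (m.choose k) * (n.choose k) *
        z ^ (m - k) * conj z ^ (n - k) := by
  refine sum_subset (range_subset_range.mpr (by omega)) fun k _ hk => ?_
  rcases Nat.lt_or_ge m k with hmk | hkm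
  · simp [Nat.choose_eq_zero_of_lt hmk]
  · simp [Nat.choose_eq_zero_of_lt (show n < k by simp at hk; omega)]

@[fun_prop]
lemma differentiable_hermiteC (m n : ℕ) : Differentiable ℝ (hermiteC m n) := by
  unfold hermiteC
  fun_prop

lemma dbar_hermiteC (m n : ℕ) (z : ℂ) : dbar (hermiteC m n) z = n * hermiteC m (n - 1) z := by
  rw [funext (hermiteC_eq_sum_range m n), dbar_sum _ (fun k _ => by fun_prop),
    hermiteC_eq_sum_range, mul_sum]
  refine sum_congr rfl fun k _ => ?_
  have hchoose : ((n - k : ℕ) : ℂ) * n.choose k = n * (n - 1).choose k := by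
    exact_mod_cast Nat.sub_mul_choose n k
  rw [dbar_monomial, Nat.sub_right_comm]
  linear_combination (-1) ^ k * (k.factorial : ℂ) * m.choose k * z ^ (m - k) *
    conj z ^ (n - 1 - k) * hchoose

lemma dbar_const_mul_conj_pow_mul_hermiteC (c : ℂ) (a m n : ℕ) (z : ℂ) :
    dbar (fun w => c * conj w ^ a * hermiteC m n w) z =
      c * (a * conj z ^ (a - 1) * hermiteC m n z + n * conj z ^ a * hermiteC m (n - 1) z) := by
  rw [dbar_mul (f := fun w => c * conj w ^ a) (by fun_prop) (by fun_prop),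
    dbar_const_mul c (f := fun w => conj w ^ a) (by fun_prop), dbar_conj_pow, dbar_hermiteC]
  ring

lemma dbar_hermiteC_summand_eq_sub (p q i : ℕ) (z : ℂ) :
    dbar (fun w => (-1) ^ (i + 1) * ((q + 1).choose (i + 1) : ℂ) * conj w ^ (i + 1) *
        hermiteC p (q + 1 - (i + 1)) w) z =
      (q + 1) * ((-1) ^ (i + 1) * (q.choose (i + 1) : ℂ) * conj z ^ (i + 1) *
          hermiteC p (q - (i + 1)) z -
        (-1) ^ i * (q.choose i : ℂ) * conj z ^ i * hermiteC p (q - i) z) := by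
  have hlow : ((q + 1).choose (i + 1) : ℂ) * (i + 1) = (q + 1) * q.choose i := by
    exact_mod_cast (Nat.add_one_mul_choose_eq q i).symm
  have hup : ((q - i : ℕ) : ℂ) * (q + 1).choose (i + 1) = (q + 1) * q.choose (i + 1) := by
    have h := Nat.sub_mul_choose (q + 1) (i + 1)
    rw [Nat.add_sub_add_right, Nat.add_sub_cancel] at h
    exact_mod_cast h
  rw [dbar_const_mul_conj_pow_mul_hermiteC, Nat.add_sub_cancel,
    show q + 1 - (i + 1) = q - i by omega, show q - i - 1 = q - (i + 1) by omega]
  push_cast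
  linear_combination (-1) ^ (i + 1) * conj z ^ i * hermiteC p (q - i) z * hlow +
    (-1) ^ (i + 1) * conj z ^ (i + 1) * hermiteC p (q - (i + 1)) z * hup

lemma Finset.sum_Icc_one_eq_sum_range {M : Type*} [AddCommMonoid M] (f : ℕ → M) (n : ℕ) :
    ∑ k ∈ Icc 1 n, f k = ∑ i ∈ range n, f (i + 1) := by
  rw [range_eq_Ico, sum_Ico_add', ← Ico_add_one_right_eq_Icc]

theorem stmt_14 (p q : ℕ) :
    ∀ z : ℂ,
      dbar (fun w => -(1 / ((q : ℂ) + 1)) * ∑ k ∈ Finset.Icc 1 (q + 1),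
        (-1) ^ k * ((q + 1).choose k : ℂ) * (starRingEnd ℂ) w ^ k *
          hermiteC p (q + 1 - k) w) z = hermiteC p q z := by
  intro z
  rw [dbar_const_mul _ (by fun_prop), dbar_sum _ (fun k _ => by fun_prop),
    sum_Icc_one_eq_sum_range, sum_congr rfl fun i _ => dbar_hermiteC_summand_eq_sub p q i z,
    ← mul_sum,
    sum_range_sub (fun i => (-1) ^ i * (q.choose i : ℂ) * conj z ^ i * hermiteC p (q - i) z),
    Nat.choose_succ_self, one_div, neg_mul, inv_mul_cancel_left₀ (Nat.cast_add_one_ne_zero q)]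
  simp
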